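/- arXiv:1004.1527 — 4 statements merged into one kernel-verified Lean document; each statement's English description precedes it below -/
import Mathlib

section
/- Let X be a Banach space, T : X → X linear with ‖T‖ ≤ 1, and suppose there is c > 0 with c‖x‖ ≤ ‖Tⁿx‖ for all x ∈ X and all n. Then for every ε > 0 and every λ in Sp(T) ∩ Γ (the unit circle), there exists x ∈ X with ‖Tx − λx‖ < ε and ‖Tⁿx‖ > 1 − ε for all n ≥ 0. -/
theorem approx_eig_aux (X : Type*) [NormedAddCommGroup X] [NormedSpace ℂ X] [CompleteSpace X]
    (T : X →L[ℂ] X) (hT : ‖T‖ ≤ 1) (lam : ℂ) (hlam : lam ∈ spectrum ℂ T)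
    (hmod : ‖lam‖ = 1) (δ : ℝ) (hδ : 0 < δ) :
    ∃ x : X, ‖x‖ = 1 ∧ ‖T x - lam • x‖ < δ := by
  rcases subsingleton_or_nontrivial X with hs | hn
  · exact absurd (isUnit_of_subsingleton _) (spectrum.mem_iff.mp hlam)
  by_contra h
  push_neg at h
  -- lower bound for all x
  have hA : ∀ x : X, δ * ‖x‖ ≤ ‖T x - lam • x‖ := by
    intro x
    rcases eq_or_ne x 0 with rfl | hx
    · simp
    · have hxn : ‖x‖ ≠ 0 := norm_ne_zero_iff.mpr hx
      have h1 : ‖((‖x‖ : ℂ)⁻¹ • x : X)‖ = 1 := by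
        rw [norm_smul]; simp [hxn]
      have := h _ h1
      rw [map_smul, smul_comm lam, ← smul_sub, norm_smul] at this
      simp only [norm_inv, Complex.norm_real, Real.norm_eq_abs, abs_norm] at this
      rw [le_inv_mul_iff₀ (lt_of_le_of_ne (norm_nonneg x) (Ne.symm hxn))] at this
      linarith [this]
  set A := algebraMap ℂ (X →L[ℂ] X) lam - T with hAdef
  have hAx : ∀ x : X, A x = lam • x - T x := by
    intro x
    simp [hAdef, Algebra.algebraMap_eq_smul_one]
  have hAlow : ∀ x : X, δ * ‖x‖ ≤ ‖A x‖ := by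
    intro x
    rw [hAx, norm_sub_rev]
    exact hA x
  set μ : ℂ := lam + ((δ/3 : ℝ) : ℂ) * lam with hμ
  have hμnorm : ‖μ‖ = 1 + δ/3 := by
    have : μ = ((1 : ℂ) + ((δ/3 : ℝ) : ℂ)) * lam := by ring
    rw [this, norm_mul, hmod, mul_one]
    rw [show (1 : ℂ) + ((δ/3 : ℝ) : ℂ) = (((1 + δ/3 : ℝ)) : ℂ) by push_cast; ring]
    rw [Complex.norm_real, Real.norm_eq_abs, abs_of_pos (by linarith)]
  set B := algebraMap ℂ (X →L[ℂ] X) μ - T with hBdef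
  have hμT : IsUnit B := by
    by_contra hbad
    have h1 : μ ∈ spectrum ℂ T := spectrum.mem_iff.mpr hbad
    have h2 := spectrum.norm_le_norm_of_mem h1
    rw [hμnorm] at h2
    linarith
  obtain ⟨u, hu⟩ := hμT
  have hBx : ∀ x : X, B x = A x + (((δ/3 : ℝ) : ℂ) * lam) • x := by
    intro x
    simp only [hBdef, hAdef, hμ, Algebra.algebraMap_eq_smul_one]
    simp [add_smul, ContinuousLinearMap.sub_apply, ContinuousLinearMap.smul_apply, ContinuousLinearMap.one_apply]
    abel
  have hsn : ∀ x : X, ‖((((δ/3 : ℝ) : ℂ) * lam) • x)‖ = δ/3 * ‖x‖ := by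
    intro x
    rw [norm_smul, norm_mul, hmod, mul_one, Complex.norm_real, Real.norm_eq_abs,
      abs_of_pos (by linarith)]
  have hBlow : ∀ x : X, (2*δ/3) * ‖x‖ ≤ ‖B x‖ := by
    intro x
    have h1 := hAlow x
    have h2 : ‖A x‖ ≤ ‖B x‖ + δ/3 * ‖x‖ := by
      have : A x = B x - (((δ/3 : ℝ) : ℂ) * lam) • x := by rw [hBx]; abel
      rw [this]
      calc ‖B x - (((δ/3 : ℝ) : ℂ) * lam) • x‖ ≤ ‖B x‖ + ‖(((δ/3 : ℝ) : ℂ) * lam) • x‖ :=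
            norm_sub_le _ _
        _ = ‖B x‖ + δ/3 * ‖x‖ := by rw [hsn]
    linarith
  have huinv : ‖(↑u⁻¹ : X →L[ℂ] X)‖ ≤ (2*δ/3)⁻¹ := by
    apply ContinuousLinearMap.opNorm_le_bound _ (by positivity)
    intro y
    have h1 := hBlow ((↑u⁻¹ : X →L[ℂ] X) y)
    have h2 : B ((↑u⁻¹ : X →L[ℂ] X) y) = y := by
      rw [← ContinuousLinearMap.mul_apply, ← hu, Units.mul_inv, ContinuousLinearMap.one_apply]
    rw [h2] at h1
    rw [inv_mul_eq_div, le_div_iff₀ (by positivity)]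
    linarith
  have hone : (1 : X →L[ℂ] X) ≠ 0 := by
    obtain ⟨x, hx⟩ := exists_ne (0 : X)
    intro hcon
    apply hx
    have := ContinuousLinearMap.ext_iff.mp hcon x
    simpa using this
  have hinvpos : 0 < ‖(↑u⁻¹ : X →L[ℂ] X)‖ := by
    rw [norm_pos_iff]
    intro hcon
    apply hone
    rw [← Units.inv_mul u, hcon, zero_mul]
  have hkey : ‖A - ↑u‖ < ‖(↑u⁻¹ : X →L[ℂ] X)‖⁻¹ := by
    have hAB : ‖A - ↑u‖ ≤ δ/3 := by
      apply ContinuousLinearMap.opNorm_le_bound _ (by positivity)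
      intro x
      have : (A - ↑u) x = -((((δ/3 : ℝ) : ℂ) * lam) • x) := by
        rw [ContinuousLinearMap.sub_apply, hu, hBx]; abel
      rw [this, norm_neg, hsn]
    have h3 : 2*δ/3 ≤ ‖(↑u⁻¹ : X →L[ℂ] X)‖⁻¹ := by
      rw [le_inv_comm₀ (by positivity) hinvpos]
      exact huinv
    linarith
  exact spectrum.mem_iff.mp hlam ⟨u.ofNearby A hkey, rfl⟩


theorem stmt_2 (X : Type*) [NormedAddCommGroup X] [NormedSpace ℂ X] [CompleteSpace X]
    (T : X →L[ℂ] X) (hT : ‖T‖ ≤ 1) (c : ℝ) (hc : 0 < c)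
    (hlow : ∀ (n : ℕ) (x : X), c * ‖x‖ ≤ ‖(T ^ n) x‖)
    (ε : ℝ) (hε : 0 < ε) (lam : ℂ) (hlam : lam ∈ spectrum ℂ T) (hmod : ‖lam‖ = 1) :
    ∃ x : X, ‖T x - lam • x‖ < ε ∧ ∀ n : ℕ, 1 - ε < ‖(T ^ n) x‖ := by
  obtain ⟨x₀, hx₀, hx₀T⟩ := approx_eig_aux X T hT lam hlam hmod (c*ε/2) (by positivity)
  have hpow : ∀ (n : ℕ) (w : X), ‖(T ^ n) w‖ ≤ ‖w‖ := by
    intro n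
    induction n with
    | zero => intro w; simp
    | succ k ih =>
      intro w
      have h1 : (T ^ (k+1)) w = (T ^ k) (T w) := by
        rw [pow_succ, ContinuousLinearMap.mul_apply]
      rw [h1]
      exact le_trans (ih (T w)) (by calc ‖T w‖ ≤ ‖T‖ * ‖w‖ := T.le_opNorm w
        _ ≤ 1 * ‖w‖ := by gcongr
        _ = ‖w‖ := one_mul _)
  set a : ℕ → ℝ := fun n => ‖(T ^ n) x₀‖ with ha
  have hac : ∀ n, c ≤ a n := fun n => by simpa [ha, hx₀] using hlow n x₀
  have hbdd : BddBelow (Set.range a) := ⟨c, by rintro _ ⟨n, rfl⟩; exact hac n⟩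
  set L := ⨅ n, a n with hL
  have hcL : c ≤ L := le_ciInf hac
  obtain ⟨N, hN⟩ : ∃ N, a N < L + c*ε := by
    apply exists_lt_of_ciInf_lt
    rw [← hL]
    nlinarith
  have haN : 0 < a N := lt_of_lt_of_le hc (hac N)
  refine ⟨(a N)⁻¹ • (T ^ N) x₀, ?_, ?_⟩
  · have hcomm : T ((T ^ N) x₀) = (T ^ N) (T x₀) := by
      rw [← ContinuousLinearMap.mul_apply, ← ContinuousLinearMap.mul_apply, ← pow_succ',
        ← pow_succ]
    have h1 : T ((a N)⁻¹ • (T ^ N) x₀) - lam • ((a N)⁻¹ • (T ^ N) x₀)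
        = (a N)⁻¹ • ((T ^ N) (T x₀ - lam • x₀)) := by
      rw [map_sub, (T ^ N).map_smul lam x₀, T.map_smul_of_tower, hcomm,
        smul_comm lam ((a N)⁻¹ : ℝ), smul_sub]
    rw [h1, norm_smul, Real.norm_eq_abs, abs_of_pos (by positivity)]
    have h2 : ‖(T ^ N) (T x₀ - lam • x₀)‖ < c*ε/2 := lt_of_le_of_lt (hpow N _) hx₀T
    have h3 : (a N)⁻¹ ≤ c⁻¹ := inv_anti₀ hc (hac N)
    calc (a N)⁻¹ * ‖(T ^ N) (T x₀ - lam • x₀)‖ < (a N)⁻¹ * (c*ε/2) := by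
          exact mul_lt_mul_of_pos_left h2 (by positivity)
      _ ≤ c⁻¹ * (c*ε/2) := by gcongr
      _ = ε/2 := by field_simp
      _ < ε := by linarith
  · intro n
    have h1 : (T ^ n) ((a N)⁻¹ • (T ^ N) x₀) = (a N)⁻¹ • ((T ^ (n + N)) x₀) := by
      rw [(T ^ n).map_smul_of_tower]
      congr 1
      rw [← ContinuousLinearMap.mul_apply, ← pow_add]
    rw [h1, norm_smul, Real.norm_eq_abs, abs_of_pos (by positivity)]
    have h2 : L ≤ a (n + N) := ciInf_le hbdd (n + N)
    have h3 : ε * c ≤ ε * a N := mul_le_mul_of_nonneg_left (hac N) hε.le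
    rw [inv_mul_eq_div, lt_div_iff₀ haN]
    nlinarith
end

section
/- Let X be a complex Banach space and T : X → X a power bounded linear operator. Set X₀ = {x ∈ X : Tⁿx → 0}. If X₀ ≠ X, then for every ε > 0 there exist λ ∈ Γ and x ∈ X with ‖Tx − λx‖ < ε and ‖Tⁿx‖ > 1 − ε for all n ≥ 0 (i.e., T has ε-slow vectors for every ε > 0). -/
/-!
The seminorm `p x = limsup ‖Tⁿ x‖` is the norm of the class of the orbit of `x` in
`ℓ^∞(X) / c₀(X)`. There `T` becomes the left shift, which is an isometry, and `p x ≠ 0` exactly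
when `x ∉ X₀`. On the closure of the image of `X`, a nonzero Banach space, the shift has spectral
radius `1`, so its spectrum contains some `λ` with `|λ| = 1`; lying on the boundary of the spectrum,
`λ` is an approximate eigenvalue. Pulling an approximate eigenvector back to `X` gives `x` with
`p (T x - λ x)` small relative to `p x`. For `y = T^N x` with `N` large, `‖T y - λ y‖` is itself
small while `‖Tⁿ y‖ ≥ p x / C` for all `n`; normalising `T^n₀ y`, for an `n₀` at which the orbit of
`y` nearly attains its infimum, gives the required vector.
-/

open Filter Topology BoundedContinuousFunction

noncomputable section

theorem Submodule.norm_mapQ_le {R M N : Type*} [Ring R] [SeminormedAddCommGroup M]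
    [SeminormedAddCommGroup N] [Module R M] [Module R N] {p : Submodule R M} {q : Submodule R N}
    (L : M →ₗ[R] N) (hL : ∀ m, ‖L m‖ ≤ ‖m‖) (h : p ≤ q.comap L) (x : M ⧸ p) :
    ‖p.mapQ q L h x‖ ≤ ‖x‖ := by
  refine le_of_forall_pos_le_add fun ε hε => ?_
  obtain ⟨m, rfl, hm⟩ := Submodule.Quotient.norm_mk_lt x hε
  calc ‖p.mapQ q L h (Submodule.Quotient.mk m)‖ ≤ ‖L m‖ := Submodule.Quotient.norm_mk_le _ _
    _ ≤ _ := (hL m).trans hm.le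

namespace BoundedContinuousFunction

variable (𝕜 X : Type*) [NormedField 𝕜] [SeminormedAddCommGroup X] [NormedSpace 𝕜 X]

-- `c₀(X)` inside `ℓ^∞(X) = ℕ →ᵇ X`.
def nullSeq : Submodule 𝕜 (ℕ →ᵇ X) where
  carrier := {f | Tendsto f atTop (𝓝 0)}
  add_mem' {f g} hf hg := by
    rw [Set.mem_ofPred_eq, coe_add, ← add_zero (0 : X)]
    exact hf.add hg
  zero_mem' := tendsto_const_nhds
  smul_mem' c _ hf := by simpa using hf.const_smul c

variable {𝕜 X} in
theorem mem_nullSeq {f : ℕ →ᵇ X} : f ∈ nullSeq 𝕜 X ↔ Tendsto f atTop (𝓝 0) := Iff.rfl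

instance : IsClosed (nullSeq 𝕜 X : Set (ℕ →ᵇ X)) := by
  have : (nullSeq 𝕜 X : Set (ℕ →ᵇ X)) = Set.range ZeroAtInftyContinuousMap.toBCF := by
    ext f
    refine ⟨fun hf => ⟨⟨f.toContinuousMap, ?_⟩, rfl⟩, ?_⟩
    · rwa [cocompact_eq_atTop]
    · rintro ⟨g, rfl⟩
      rw [SetLike.mem_coe, mem_nullSeq, ← cocompact_eq_atTop]
      exact g.zero_at_infty'
  rw [this]
  exact ZeroAtInftyContinuousMap.isClosed_range_toBCF

def shiftLeft : (ℕ →ᵇ X) →ₗ[𝕜] ℕ →ᵇ X :=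
  compContinuousCLM X 𝕜 ⟨Nat.succ, continuous_of_discreteTopology⟩

def shiftRight : (ℕ →ᵇ X) →ₗ[𝕜] ℕ →ᵇ X where
  toFun f := ofNormedAddCommGroupDiscrete (fun n => if n = 0 then 0 else f (n - 1)) ‖f‖
    fun n => by split_ifs <;> simp [norm_coe_le_norm]
  map_add' f g := by ext (_ | n) <;> simp
  map_smul' c f := by ext (_ | n) <;> simp

variable {𝕜 X}

@[simp] theorem shiftLeft_apply (f : ℕ →ᵇ X) (n : ℕ) : shiftLeft 𝕜 X f n = f (n + 1) := rfl

@[simp] theorem shiftRight_apply_zero (f : ℕ →ᵇ X) : shiftRight 𝕜 X f 0 = 0 := rfl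

@[simp] theorem shiftRight_apply_succ (f : ℕ →ᵇ X) (n : ℕ) : shiftRight 𝕜 X f (n + 1) = f n := rfl

theorem norm_shiftLeft_le (f : ℕ →ᵇ X) : ‖shiftLeft 𝕜 X f‖ ≤ ‖f‖ :=
  norm_compContinuous_le f _

theorem norm_shiftRight_le (f : ℕ →ᵇ X) : ‖shiftRight 𝕜 X f‖ ≤ ‖f‖ :=
  (norm_le (norm_nonneg f)).2 fun n => by cases n <;> simp [norm_coe_le_norm]

theorem nullSeq_le_comap_shiftLeft : nullSeq 𝕜 X ≤ (nullSeq 𝕜 X).comap (shiftLeft 𝕜 X) :=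
  fun _ hf => hf.comp (tendsto_add_atTop_nat 1)

theorem nullSeq_le_comap_shiftRight : nullSeq 𝕜 X ≤ (nullSeq 𝕜 X).comap (shiftRight 𝕜 X) :=
  fun _ hf => (tendsto_add_atTop_iff_nat 1).1 hf

theorem sub_shiftRight_shiftLeft_mem_nullSeq (f : ℕ →ᵇ X) :
    f - shiftRight 𝕜 X (shiftLeft 𝕜 X f) ∈ nullSeq 𝕜 X := by
  rw [mem_nullSeq, ← tendsto_add_atTop_iff_nat 1]
  simpa using tendsto_const_nhds

variable (𝕜 X) in
def shiftQuot : (ℕ →ᵇ X) ⧸ nullSeq 𝕜 X →ₗᵢ[𝕜] (ℕ →ᵇ X) ⧸ nullSeq 𝕜 X where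
  toLinearMap := (nullSeq 𝕜 X).mapQ _ (shiftLeft 𝕜 X) nullSeq_le_comap_shiftLeft
  norm_map' q := by
    refine le_antisymm (Submodule.norm_mapQ_le _ norm_shiftLeft_le _ q) ?_
    obtain ⟨f, rfl⟩ := Submodule.Quotient.mk_surjective _ q
    have hf : (Submodule.Quotient.mk f : (ℕ →ᵇ X) ⧸ nullSeq 𝕜 X) =
        (nullSeq 𝕜 X).mapQ _ (shiftRight 𝕜 X) nullSeq_le_comap_shiftRight
          (Submodule.Quotient.mk (shiftLeft 𝕜 X f)) :=
      (Submodule.Quotient.eq _).2 (sub_shiftRight_shiftLeft_mem_nullSeq f)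
    rw [hf]
    exact Submodule.norm_mapQ_le _ norm_shiftRight_le _ _

theorem eventually_norm_lt_of_norm_mk_lt {f : ℕ →ᵇ X} {η : ℝ}
    (h : ‖(Submodule.Quotient.mk f : (ℕ →ᵇ X) ⧸ nullSeq 𝕜 X)‖ < η) :
    ∀ᶠ n in atTop, ‖f n‖ < η := by
  obtain ⟨g, hgf, hg⟩ :=
    Submodule.Quotient.norm_mk_lt (Submodule.Quotient.mk f : (ℕ →ᵇ X) ⧸ nullSeq 𝕜 X) (sub_pos.2 h)
  rw [add_sub_cancel] at hg
  have hfg : Tendsto (fun n => ‖f n - g n‖) atTop (𝓝 0) := by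
    simpa using ((Submodule.Quotient.eq _).1 hgf.symm).norm
  filter_upwards [hfg.eventually (gt_mem_nhds (sub_pos.2 hg))] with n hn
  calc ‖f n‖ ≤ ‖g n‖ + ‖f n - g n‖ := norm_le_insert' _ _
    _ ≤ ‖g‖ + ‖f n - g n‖ := by gcongr; exact norm_coe_le_norm g n
    _ < η := by linarith

end BoundedContinuousFunction

theorem ContinuousLinearMap.notMem_spectrum_of_le_norm_sub_smul {𝕜 Y : Type*}
    [NontriviallyNormedField 𝕜] [NormedAddCommGroup Y] [NormedSpace 𝕜 Y] [CompleteSpace Y]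
    {S : Y →L[𝕜] Y} {lam mu : 𝕜} {δ : ℝ} (hmu : mu ∉ spectrum 𝕜 S)
    (hδ : ∀ y, δ * ‖y‖ ≤ ‖S y - lam • y‖)
    (hdist : 2 * ‖mu - lam‖ < δ) : lam ∉ spectrum 𝕜 S := by
  obtain ⟨u, hu⟩ := spectrum.notMem_iff.1 hmu
  set R : Y →L[𝕜] Y := ↑u⁻¹
  have hδ0 : 0 < δ := lt_of_le_of_lt (by positivity) hdist
  have hR : ‖R‖ ≤ 2 / δ := by
    refine opNorm_le_bound _ (by positivity) fun z => ?_
    have huR : -z = (S (R z) - lam • R z) - (mu - lam) • R z := by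
      have hz : (↑u * ↑u⁻¹ : Y →L[𝕜] Y) z = z := by simp
      nth_rw 1 [← hz]
      simp [hu, Algebra.algebraMap_eq_smul_one, R, sub_smul]
    have h1 := norm_sub_norm_le (S (R z) - lam • R z) ((mu - lam) • R z)
    rw [← huR, norm_neg, norm_smul] at h1
    rw [div_mul_eq_mul_div, le_div_iff₀ hδ0]
    nlinarith [hδ (R z), norm_nonneg (R z)]
  have hsmall : ‖(mu - lam) • R‖ < 1 := by
    calc ‖(mu - lam) • R‖ ≤ ‖mu - lam‖ * (2 / δ) := (norm_smul_le _ _).trans (by gcongr)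
      _ < 1 := by rw [mul_div_assoc', div_lt_one hδ0]; linarith
  have hfactor : algebraMap 𝕜 (Y →L[𝕜] Y) lam - S = u * (1 - (mu - lam) • R) := by
    rw [mul_sub, mul_one, mul_smul_comm, u.mul_inv, hu, Algebra.algebraMap_eq_smul_one,
      Algebra.algebraMap_eq_smul_one, sub_smul]
    abel
  rw [spectrum.mem_iff, not_not, hfactor]
  exact u.isUnit.mul (Units.oneSub _ hsmall).isUnit

theorem ContinuousLinearMap.exists_norm_eq_one_forall_exists_norm_sub_smul_lt {Y : Type*}
    [NormedAddCommGroup Y] [NormedSpace ℂ Y] [CompleteSpace Y] [Nontrivial Y] (S : Y →L[ℂ] Y)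
    (hS : ∀ y, ‖S y‖ = ‖y‖) :
    ∃ lam : ℂ, ‖lam‖ = 1 ∧ ∀ δ > 0, ∃ y, ‖S y - lam • y‖ < δ * ‖y‖ := by
  set S' : Y →ₗᵢ[ℂ] Y := ⟨S, hS⟩
  have hpow : ∀ n : ℕ, ‖S ^ n‖₊ = 1 := fun n => by
    have : S ^ n = (S' ^ n).toContinuousLinearMap := by
      ext y; simp [S', LinearIsometry.coe_pow]
    rw [this, ← NNReal.coe_inj, coe_nnnorm, LinearIsometry.norm_toContinuousLinearMap,
      NNReal.coe_one]
  have hrad : spectralRadius ℂ S = 1 := by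
    refine tendsto_nhds_unique (spectrum.pow_nnnorm_pow_one_div_tendsto_nhds_spectralRadius S) ?_
    simp [hpow]
  obtain ⟨lam, hlam, hlam1⟩ := spectrum.exists_nnnorm_eq_spectralRadius S
  rw [hrad, ENNReal.coe_eq_one] at hlam1
  have hlam1' : ‖lam‖ = 1 := congrArg NNReal.toReal hlam1
  refine ⟨lam, hlam1', fun δ hδ => ?_⟩
  by_contra! hbelow
  set mu : ℂ := (1 + δ / 4 : ℝ) * lam
  have hmu : mu ∉ spectrum ℂ S := fun h => by
    have := (spectrum.norm_le_norm_of_mem h).trans S'.norm_toContinuousLinearMap_le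
    rw [norm_mul, Complex.norm_real, hlam1', mul_one, Real.norm_of_nonneg (by positivity)] at this
    linarith
  refine S.notMem_spectrum_of_le_norm_sub_smul hmu hbelow ?_ hlam
  have : mu - lam = (δ / 4 : ℝ) * lam := by simp only [mu]; push_cast; ring
  rw [this, norm_mul, Complex.norm_real, hlam1', mul_one, Real.norm_of_nonneg (by positivity)]
  linarith

theorem ContinuousLinearMap.exists_forall_exists_mem_norm_sub_smul_lt {Q : Type*}
    [NormedAddCommGroup Q] [NormedSpace ℂ Q] [CompleteSpace Q] (S : Q →L[ℂ] Q)
    (hS : ∀ q, ‖S q‖ = ‖q‖) {Y : Submodule ℂ Q} (hYc : IsClosed (Y : Set Q)) (hY : ∀ y ∈ Y, S y ∈ Y)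
    (hY0 : Y ≠ ⊥) :
    ∃ lam : ℂ, ‖lam‖ = 1 ∧ ∀ δ > 0, ∃ y ∈ Y, ‖S y - lam • y‖ < δ * ‖y‖ := by
  have : CompleteSpace Y := hYc.completeSpace_coe
  have : Nontrivial Y := Submodule.nontrivial_iff_ne_bot.2 hY0
  let SY : Y →L[ℂ] Y := (S.comp Y.subtypeL).codRestrict Y fun y => hY y y.2
  obtain ⟨lam, hlam, happrox⟩ :=
    SY.exists_norm_eq_one_forall_exists_norm_sub_smul_lt fun y => hS y
  refine ⟨lam, hlam, fun δ hδ => ?_⟩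
  obtain ⟨y, hy⟩ := happrox δ hδ
  exact ⟨y, y.2, hy⟩

theorem ContinuousLinearMap.pow_apply_sub_smul {𝕜 X : Type*} [NormedField 𝕜]
    [SeminormedAddCommGroup X] [NormedSpace 𝕜 X] (T : X →L[𝕜] X) (n : ℕ) (lam : 𝕜) (x : X) :
    (T ^ n) (T x - lam • x) = T ((T ^ n) x) - lam • (T ^ n) x := by
  rw [map_sub, map_smul, ← mul_apply_eq_comp T, ← pow_succ', pow_succ, mul_apply_eq_comp]

section Orbit

variable {𝕜 X : Type*} [NontriviallyNormedField 𝕜] [SeminormedAddCommGroup X] [NormedSpace 𝕜 X]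
  {T : X →L[𝕜] X} {C : ℝ}

def orbit (hC : ∀ n : ℕ, ‖T ^ n‖ ≤ C) : X →ₗ[𝕜] ℕ →ᵇ X where
  toFun x := ofNormedAddCommGroupDiscrete (fun n => (T ^ n) x) (C * ‖x‖)
    fun n => (T ^ n).le_of_opNorm_le (hC n) x
  map_add' x y := by ext n; simp
  map_smul' c x := by ext n; simp

-- The quotient norm makes `‖orbitClass hC x‖ = limsup ‖Tⁿ x‖`.
def orbitClass (hC : ∀ n : ℕ, ‖T ^ n‖ ≤ C) : X →ₗ[𝕜] (ℕ →ᵇ X) ⧸ nullSeq 𝕜 X :=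
  (nullSeq 𝕜 X).mkQ ∘ₗ orbit hC

variable (hC : ∀ n : ℕ, ‖T ^ n‖ ≤ C)

theorem norm_orbit_le (x : X) : ‖orbit hC x‖ ≤ C * ‖x‖ :=
  (norm_le ((norm_nonneg _).trans ((T ^ 0).le_of_opNorm_le (hC 0) x))).2
    fun n => (T ^ n).le_of_opNorm_le (hC n) x

theorem orbitClass_eq_zero_iff (x : X) :
    orbitClass hC x = 0 ↔ Tendsto (fun n => (T ^ n) x) atTop (𝓝 0) :=
  Submodule.Quotient.mk_eq_zero _

theorem shiftQuot_orbitClass (x : X) :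
    shiftQuot 𝕜 X (orbitClass hC x) = orbitClass hC (T x) :=
  rfl

theorem norm_orbitClass_pow_apply (n : ℕ) (x : X) :
    ‖orbitClass hC ((T ^ n) x)‖ = ‖orbitClass hC x‖ := by
  induction n with
  | zero => simp
  | succ n ih =>
    rw [pow_succ', mul_apply_eq_comp, ← shiftQuot_orbitClass, LinearIsometry.norm_map, ih]

theorem norm_orbitClass_le (x : X) (n : ℕ) : ‖orbitClass hC x‖ ≤ C * ‖(T ^ n) x‖ := by
  rw [← norm_orbitClass_pow_apply hC n x]
  exact (Submodule.Quotient.norm_mk_le _ _).trans (norm_orbit_le hC _)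

theorem eventually_norm_pow_apply_lt {x : X} {η : ℝ} (h : ‖orbitClass hC x‖ < η) :
    ∀ᶠ n in atTop, ‖(T ^ n) x‖ < η :=
  eventually_norm_lt_of_norm_mk_lt h

end Orbit

theorem exists_norm_orbitClass_sub_smul_lt {X : Type*} [NormedAddCommGroup X] [NormedSpace ℂ X]
    [CompleteSpace X] {T : X →L[ℂ] X} {C : ℝ} (hC : ∀ n : ℕ, ‖T ^ n‖ ≤ C) {u : X}
    (hu : orbitClass hC u ≠ 0) :
    ∃ lam : ℂ, ‖lam‖ = 1 ∧
      ∀ δ > 0, ∃ x, ‖orbitClass hC (T x - lam • x)‖ < δ * ‖orbitClass hC x‖ := by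
  set Y := (LinearMap.range (orbitClass hC)).topologicalClosure
  have hY : Y ≤ Y.comap (shiftQuot ℂ X).toLinearMap := by
    refine Submodule.topologicalClosure_minimal _ ?_
      ((Submodule.isClosed_topologicalClosure _).preimage (shiftQuot ℂ X).continuous)
    rintro _ ⟨x, rfl⟩
    rw [Submodule.mem_comap, LinearIsometry.coe_toLinearMap, shiftQuot_orbitClass]
    exact Submodule.le_topologicalClosure _ (LinearMap.mem_range_self _ _)
  have hY0 : Y ≠ ⊥ := (Submodule.ne_bot_iff _).2
    ⟨_, Submodule.le_topologicalClosure _ (LinearMap.mem_range_self _ u), hu⟩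
  obtain ⟨lam, hlam, happrox⟩ :=
    (shiftQuot ℂ X).toContinuousLinearMap.exists_forall_exists_mem_norm_sub_smul_lt
      (shiftQuot ℂ X).norm_map (Submodule.isClosed_topologicalClosure _) (fun q hq => hY hq) hY0
  refine ⟨lam, hlam, fun δ hδ => ?_⟩
  obtain ⟨y, hyY, hy⟩ := happrox δ hδ
  have hopen : IsOpen {q | ‖shiftQuot ℂ X q - lam • q‖ < δ * ‖q‖} :=
    isOpen_lt (by fun_prop) (by fun_prop)
  rw [← SetLike.mem_coe, Submodule.topologicalClosure_coe, LinearMap.coe_range] at hyY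
  obtain ⟨_, hq, x, rfl⟩ := mem_closure_iff.1 hyY _ hopen hy
  exact ⟨x, by simpa [shiftQuot_orbitClass] using hq⟩

theorem exists_forall_one_sub_mul_lt {a : ℕ → ℝ} {m : ℝ} (hm : 0 < m) (ha : ∀ n, m ≤ a n)
    {ε : ℝ} (hε : 0 < ε) : ∃ n₀, ∀ n, (1 - ε) * a n₀ < a n := by
  have hbdd : BddBelow (Set.range a) := ⟨m, Set.forall_mem_range.2 ha⟩
  have hinf : 0 < ⨅ n, a n := hm.trans_le (le_ciInf ha)
  obtain ⟨n₀, hn₀⟩ := exists_lt_of_ciInf_lt (lt_mul_of_one_lt_right hinf (lt_add_of_pos_right 1 hε))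
  refine ⟨n₀, fun n => lt_of_lt_of_le ?_ (ciInf_le hbdd n)⟩
  nlinarith [ciInf_le hbdd n₀]

theorem exists_norm_sub_smul_le_forall_one_sub_lt_norm_pow_apply {𝕜 X : Type*} [RCLike 𝕜]
    [SeminormedAddCommGroup X] [NormedSpace 𝕜 X] {T : X →L[𝕜] X} {C : ℝ}
    (hC : ∀ n : ℕ, ‖T ^ n‖ ≤ C) {y : X} {m : ℝ} (hm : 0 < m) (hy : ∀ n, m ≤ ‖(T ^ n) y‖)
    (lam : 𝕜) {ε : ℝ} (hε : 0 < ε) :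
    ∃ x, ‖T x - lam • x‖ ≤ C * ‖T y - lam • y‖ / m ∧ ∀ n, 1 - ε < ‖(T ^ n) x‖ := by
  obtain ⟨n₀, hn₀⟩ := exists_forall_one_sub_mul_lt hm hy hε
  set v := (T ^ n₀) y
  have hv : 0 < ‖v‖ := hm.trans_le (hy n₀)
  have hnorm : ∀ w : X, ‖(‖v‖⁻¹ : 𝕜) • w‖ = ‖w‖ / ‖v‖ := fun w => by
    rw [norm_smul, norm_inv, RCLike.norm_ofReal, abs_norm, inv_mul_eq_div]
  refine ⟨(‖v‖⁻¹ : 𝕜) • v, ?_, fun n => ?_⟩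
  · rw [map_smul, smul_comm, ← smul_sub, hnorm, ← T.pow_apply_sub_smul]
    calc ‖(T ^ n₀) (T y - lam • y)‖ / ‖v‖ ≤ C * ‖T y - lam • y‖ / ‖v‖ := by
          gcongr; exact (T ^ n₀).le_of_opNorm_le (hC n₀) _
      _ ≤ C * ‖T y - lam • y‖ / m :=
          div_le_div_of_nonneg_left ((norm_nonneg _).trans ((T ^ n₀).le_of_opNorm_le (hC n₀) _))
            hm (hy n₀)
  · rw [map_smul, hnorm, ← mul_apply_eq_comp, ← pow_add, lt_div_iff₀ hv]
    exact hn₀ (n + n₀)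

theorem stmt_4 (X : Type*) [NormedAddCommGroup X] [NormedSpace ℂ X] [CompleteSpace X]
    (T : X →L[ℂ] X) (C : ℝ) (hC : ∀ n : ℕ, ‖T ^ n‖ ≤ C)
    (h0 : {x : X | Filter.Tendsto (fun n : ℕ => (T ^ n) x) Filter.atTop (nhds 0)} ≠ Set.univ) :
    ∀ ε : ℝ, 0 < ε → ∃ (lam : ℂ) (x : X), ‖lam‖ = 1 ∧
      ‖T x - lam • x‖ < ε ∧ ∀ n : ℕ, 1 - ε < ‖(T ^ n) x‖ := by
  intro ε hε
  obtain ⟨u, hu⟩ : ∃ u, orbitClass hC u ≠ 0 := by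
    simpa [Set.ne_univ_iff_exists_notMem, orbitClass_eq_zero_iff] using h0
  have hC0 : 0 < C :=
    pos_of_mul_pos_left ((norm_pos_iff.2 hu).trans_le (norm_orbitClass_le hC u 0)) (norm_nonneg _)
  obtain ⟨lam, hlam, happrox⟩ := exists_norm_orbitClass_sub_smul_lt hC hu
  obtain ⟨x, hx⟩ := happrox (ε / C ^ 2) (by positivity)
  set p := ‖orbitClass hC x‖
  have hp : 0 < p := pos_of_mul_pos_right ((norm_nonneg _).trans_lt hx) (by positivity)
  obtain ⟨N, hN⟩ := (eventually_norm_pow_apply_lt hC hx).exists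
  have hy : ∀ n, p / C ≤ ‖(T ^ n) ((T ^ N) x)‖ := fun n => by
    rw [div_le_iff₀' hC0, ← mul_apply_eq_comp, ← pow_add]
    exact norm_orbitClass_le hC x (n + N)
  obtain ⟨w, hw, hslow⟩ :=
    exists_norm_sub_smul_le_forall_one_sub_lt_norm_pow_apply hC (by positivity) hy lam hε
  refine ⟨lam, w, hlam, hw.trans_lt ?_, hslow⟩
  calc C * ‖T ((T ^ N) x) - lam • (T ^ N) x‖ / (p / C) < C * (ε / C ^ 2 * p) / (p / C) := by
        rw [← T.pow_apply_sub_smul]; gcongr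
    _ = ε := by field_simp
end
end

section
/- Let X be a complex Banach space, T : X → X with ‖T‖ ≤ 1, and λ ∈ Γ. For every δ > 0 and m ∈ ℕ there exists ε > 0 such that: if x is ε-slow for T with witness λ, then the Cesàro mean S_{m,λ}x = (1/(m+1)) Σ_{i=0}^{m} T^i x / λ^i satisfies ‖S_{m,λ}x − x‖ < δ and ‖Tⁿ(S_{m,λ}x)‖ > 1 − δ for all n ≥ 0. -/
theorem stmt_6 (X : Type*) [NormedAddCommGroup X] [NormedSpace ℂ X] [CompleteSpace X]
    (T : X →L[ℂ] X) (hT : ‖T‖ ≤ 1) (lam : ℂ) (hlam : ‖lam‖ = 1)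
    (δ : ℝ) (hδ : 0 < δ) (m : ℕ) :
    ∃ ε > (0 : ℝ), ∀ x : X,
      ‖T x - lam • x‖ < ε → (∀ n : ℕ, 1 - ε < ‖(T ^ n) x‖) →
      (let S : X := (((m : ℂ) + 1)⁻¹) • ∑ i ∈ Finset.range (m + 1), (lam ^ i)⁻¹ • (T ^ i) x
       ‖S - x‖ < δ ∧ ∀ n : ℕ, 1 - δ < ‖(T ^ n) S‖) := by
  set ε : ℝ := δ / (m + 2) with hε
  have hεpos : 0 < ε := by positivity
  refine ⟨ε, hεpos, ?_⟩
  intro x hx hn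
  have hlamne : lam ≠ 0 := by
    intro h; rw [h, norm_zero] at hlam; norm_num at hlam
  have hlampow : ∀ i : ℕ, ‖lam ^ i‖ = 1 := fun i => by rw [norm_pow, hlam, one_pow]
  -- contraction pointwise
  have hcontr : ∀ (n : ℕ) (y : X), ‖(T ^ n) y‖ ≤ ‖y‖ := by
    intro n
    induction n with
    | zero => intro y; simp
    | succ k ih =>
      intro y
      rw [pow_succ']
      calc ‖(T * T ^ k) y‖ = ‖T ((T ^ k) y)‖ := rfl
        _ ≤ ‖T‖ * ‖(T ^ k) y‖ := T.le_opNorm _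
        _ ≤ 1 * ‖y‖ := by
            exact mul_le_mul hT (ih y) (norm_nonneg _) (by norm_num)
        _ = ‖y‖ := one_mul _
  -- key estimate
  have hdiff : ∀ i : ℕ, ‖(T ^ i) x - lam ^ i • x‖ ≤ i * ε := by
    intro i
    induction i with
    | zero => simp
    | succ k ih =>
      have happ : (T ^ (k + 1)) x = T ((T ^ k) x) := by rw [pow_succ']; rfl
      have heq : (T ^ (k + 1)) x - lam ^ (k + 1) • x
          = T ((T ^ k) x - lam ^ k • x) + lam ^ k • (T x - lam • x) := by
        rw [happ, map_sub, map_smul, smul_sub, smul_smul, ← pow_succ]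
        abel
      rw [heq]
      calc ‖T ((T ^ k) x - lam ^ k • x) + lam ^ k • (T x - lam • x)‖
          ≤ ‖T ((T ^ k) x - lam ^ k • x)‖ + ‖lam ^ k • (T x - lam • x)‖ := norm_add_le _ _
        _ ≤ ‖(T ^ k) x - lam ^ k • x‖ + ‖T x - lam • x‖ := by
            have hA : ‖T ((T ^ k) x - lam ^ k • x)‖ ≤ ‖(T ^ k) x - lam ^ k • x‖ := by
              calc ‖T ((T ^ k) x - lam ^ k • x)‖ ≤ ‖T‖ * ‖(T ^ k) x - lam ^ k • x‖ :=
                  T.le_opNorm _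
                _ ≤ 1 * _ := mul_le_mul_of_nonneg_right hT (norm_nonneg _)
                _ = _ := one_mul _
            have hB : ‖lam ^ k • (T x - lam • x)‖ = ‖T x - lam • x‖ := by
              rw [norm_smul, hlampow, one_mul]
            rw [hB]; exact add_le_add hA le_rfl
        _ ≤ k * ε + ε := add_le_add ih hx.le
        _ = (k + 1 : ℕ) * ε := by push_cast; ring
  have hterm : ∀ i ∈ Finset.range (m + 1), ‖(lam ^ i)⁻¹ • (T ^ i) x - x‖ ≤ m * ε := by
    intro i hi
    have hi' : i ≤ m := Nat.lt_succ_iff.mp (Finset.mem_range.mp hi)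
    have : (lam ^ i)⁻¹ • (T ^ i) x - x = (lam ^ i)⁻¹ • ((T ^ i) x - lam ^ i • x) := by
      rw [smul_sub, smul_smul, inv_mul_cancel₀ (pow_ne_zero _ hlamne), one_smul]
    rw [this, norm_smul, norm_inv, hlampow, inv_one, one_mul]
    calc ‖(T ^ i) x - lam ^ i • x‖ ≤ i * ε := hdiff i
      _ ≤ m * ε := mul_le_mul_of_nonneg_right (by exact_mod_cast hi') hεpos.le
  intro S
  have hSx : S - x = ((m : ℂ) + 1)⁻¹ •
      ∑ i ∈ Finset.range (m + 1), ((lam ^ i)⁻¹ • (T ^ i) x - x) := by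
    rw [Finset.sum_sub_distrib, Finset.sum_const, Finset.card_range, smul_sub]
    congr 1
    rw [← Nat.cast_smul_eq_nsmul ℂ (m + 1) x, smul_smul]
    have hne : ((m : ℂ) + 1) ≠ 0 := Nat.cast_add_one_ne_zero m
    have : ((m : ℂ) + 1)⁻¹ * ((m + 1 : ℕ) : ℂ) = 1 := by
      rw [Nat.cast_add, Nat.cast_one]
      exact inv_mul_cancel₀ hne
    rw [this, one_smul]
  have hnorm1 : ‖((m : ℂ) + 1)⁻¹‖ = ((m : ℝ) + 1)⁻¹ := by
    rw [norm_inv]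
    congr 1
    rw [show ((m : ℂ) + 1) = ((m + 1 : ℕ) : ℂ) by push_cast; ring]
    rw [Complex.norm_natCast]
    push_cast; ring
  have hSxbound : ‖S - x‖ ≤ m * ε := by
    rw [hSx, norm_smul, hnorm1]
    calc ((m : ℝ) + 1)⁻¹ * ‖∑ i ∈ Finset.range (m + 1), ((lam ^ i)⁻¹ • (T ^ i) x - x)‖
        ≤ ((m : ℝ) + 1)⁻¹ * ((m + 1) * (m * ε)) := by
          gcongr
          calc ‖∑ i ∈ Finset.range (m + 1), ((lam ^ i)⁻¹ • (T ^ i) x - x)‖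
              ≤ ∑ i ∈ Finset.range (m + 1), ‖(lam ^ i)⁻¹ • (T ^ i) x - x‖ :=
                norm_sum_le _ _
            _ ≤ ∑ _i ∈ Finset.range (m + 1), m * ε := Finset.sum_le_sum hterm
            _ = (m + 1) * (m * ε) := by rw [Finset.sum_const, Finset.card_range]; rw [nsmul_eq_mul]; push_cast; ring
      _ = m * ε := by field_simp
  have hmεδ : (m + 1) * ε < δ := by
    rw [hε]
    rw [div_eq_mul_inv, ← mul_assoc]
    rw [mul_comm _ δ, mul_assoc]
    nth_rewrite 2 [← mul_one δ]
    gcongr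
    rw [mul_inv_lt_iff₀ (by positivity), one_mul]
    norm_num
  constructor
  · calc ‖S - x‖ ≤ m * ε := hSxbound
      _ < (m + 1) * ε := by nlinarith
      _ < δ := hmεδ
  · intro n
    have h1 : ‖(T ^ n) x‖ ≤ ‖(T ^ n) S‖ + ‖(T ^ n) (S - x)‖ := by
      have : (T ^ n) x = (T ^ n) S - (T ^ n) (S - x) := by rw [map_sub]; abel
      rw [this]
      exact norm_sub_le _ _
    have h2 : ‖(T ^ n) (S - x)‖ ≤ m * ε := le_trans (hcontr n _) hSxbound
    have h3 := hn n
    nlinarith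
end

section
/- (Mean ergodic theorem for power bounded operators on reflexive spaces) Let X be a reflexive Banach space and T : X → X a power bounded linear operator. Then the Cesàro means S_m = (1/(m+1)) Σ_{k=0}^{m} T^k converge strongly (pointwise in norm) to a bounded projection P of X onto ker(I − T), and P commutes with T. -/
/-!
Write `A n = (n + 1)⁻¹ ∑_{k ≤ n} T^k`; power boundedness gives `‖A n‖ ≤ C`. Fix `x`. By
reflexivity (Banach–Alaoglu in the bidual) the bounded sequence `A n x` has a weak cluster point
`y`. Telescoping gives `A n ((T - 1) x) = (n + 1)⁻¹ (T^(n+1) x - x) → 0`, and `T` commutes with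
`A n`, so `(T - 1) y = 0`. Since `A n x - x ∈ range (T - 1)` and closed subspaces are weakly closed
(Mazur), `y - x` lies in the closure of `range (T - 1)`, where `A n → 0` pointwise by
equicontinuity. Hence `A n x = y - A n (y - x) → y`. The pointwise limit of the equicontinuous
family `A n` is a continuous linear map, and it is the required projection.
-/

open Filter Topology Finset Bornology NormedSpace

theorem MapClusterPt.eq_of_tendsto {X α : Type*} [TopologicalSpace X] [T2Space X] {l : Filter α}
    {u : α → X} {x y : X} (hx : MapClusterPt x l u) (hy : Tendsto u l (𝓝 y)) : x = y :=
  eq_of_nhds_neBot (hx.neBot.mono (inf_le_inf_left _ hy))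

theorem RCLike.norm_inv_natCast_add_one {𝕜 : Type*} [RCLike 𝕜] (n : ℕ) :
    ‖((n : 𝕜) + 1)⁻¹‖ = ((n : ℝ) + 1)⁻¹ := by
  rw [norm_inv]; norm_cast

section Reflexive

variable {𝕜 E : Type*} [RCLike 𝕜] [NormedAddCommGroup E] [NormedSpace 𝕜 E]

theorem Submodule.toWeakSpace_closure (p : Submodule 𝕜 E) :
    toWeakSpace 𝕜 E '' closure p = closure (toWeakSpace 𝕜 E '' p) := by
  let : NormedSpace ℝ E := NormedSpace.restrictScalars ℝ 𝕜 E
  exact (p.restrictScalars ℝ).convex.toWeakSpace_closure 𝕜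

theorem exists_mapClusterPt_toWeakSpace_of_isBounded
    (hrefl : Function.Surjective (inclusionInDoubleDual 𝕜 E)) {ι : Type*} {l : Filter ι}
    [l.NeBot] {u : ι → E} (hu : IsBounded (Set.range u)) :
    ∃ y, MapClusterPt (toWeakSpace 𝕜 E y) l (toWeakSpace 𝕜 E ∘ u) := by
  have hsurj : Set.range (inclusionInDoubleDualWeak 𝕜 E) = Set.univ := by
    refine Set.eq_univ_of_forall fun Λ => ?_
    obtain ⟨x, hx⟩ := hrefl (WeakDual.toStrongDual Λ)
    exact ⟨toWeakSpace 𝕜 E x, DFunLike.ext _ _ fun φ => DFunLike.congr_fun hx φ⟩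
  have hcpt := isCompact_closure_of_isBounded 𝕜 E (toWeakSpace 𝕜 E '' Set.range u)
    (by simpa [Set.preimage_image_eq _ (toWeakSpace 𝕜 E).injective] using hu)
    (hsurj ▸ Set.subset_univ _)
  obtain ⟨y, -, hy⟩ := hcpt.exists_mapClusterPt (f := l) (u := toWeakSpace 𝕜 E ∘ u)
    (le_principal_iff.2 <| mem_map.2 <| Eventually.of_forall fun i =>
      subset_closure (Set.mem_image_of_mem _ (Set.mem_range_self (f := u) i)))
  exact ⟨(toWeakSpace 𝕜 E).symm y, by simpa using hy⟩

end Reflexive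

namespace ContinuousLinearMap

variable {𝕜 E : Type*} [RCLike 𝕜] [NormedAddCommGroup E] [NormedSpace 𝕜 E]

def cesaroMean (T : E →L[𝕜] E) (n : ℕ) : E →L[𝕜] E :=
  ((n : 𝕜) + 1)⁻¹ • ∑ k ∈ range (n + 1), T ^ k

variable {T : E →L[𝕜] E} {C : ℝ}

theorem norm_cesaroMean_le (hC : ∀ n, ‖T ^ n‖ ≤ C) (n : ℕ) : ‖T.cesaroMean n‖ ≤ C :=
  calc ‖T.cesaroMean n‖ ≤ ((n : ℝ) + 1)⁻¹ * ∑ k ∈ range (n + 1), ‖T ^ k‖ := by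
        rw [cesaroMean, norm_smul, RCLike.norm_inv_natCast_add_one]; gcongr; exact norm_sum_le _ _
    _ ≤ ((n : ℝ) + 1)⁻¹ * ∑ _k ∈ range (n + 1), C := by gcongr; exact hC _
    _ = C := by
        rw [sum_const, card_range, nsmul_eq_mul]; push_cast
        field_simp

theorem cesaroMean_apply_of_apply_eq_self {x : E} (hx : T x = x) (n : ℕ) :
    T.cesaroMean n x = x := by
  have hpow (k : ℕ) : (T ^ k) x = x := by
    rw [pow_apply_eq_iterate]; exact Function.IsFixedPt.iterate hx k
  rw [cesaroMean, smul_apply, _root_.sum_apply]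
  simp only [hpow, sum_const, card_range]
  rw [← Nat.cast_smul_eq_nsmul 𝕜, Nat.cast_succ, inv_smul_smul₀ (Nat.cast_add_one_ne_zero n)]

theorem commute_cesaroMean (n : ℕ) : Commute T (T.cesaroMean n) :=
  (Commute.sum_right _ _ _ fun k _ => (Commute.refl T).pow_right k).smul_right _

theorem cesaroMean_mul_sub_one (n : ℕ) :
    T.cesaroMean n * (T - 1) = ((n : 𝕜) + 1)⁻¹ • (T ^ (n + 1) - 1) := by
  rw [cesaroMean, smul_mul_assoc, geom_sum_mul]

theorem cesaroMean_apply_sub_one_comm (n : ℕ) (x : E) :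
    T.cesaroMean n ((T - 1) x) = (T - 1) (T.cesaroMean n x) := by
  rw [← mul_apply_eq_comp, ← mul_apply_eq_comp,
    ((commute_cesaroMean n).sub_left (Commute.one_left _)).eq]

theorem tendsto_cesaroMean_apply_sub_one (hC : ∀ n, ‖T ^ n‖ ≤ C) (x : E) :
    Tendsto (fun n => T.cesaroMean n ((T - 1) x)) atTop (𝓝 0) := by
  refine squeeze_zero_norm (fun n => ?_)
    (by simpa using tendsto_one_div_add_atTop_nhds_zero_nat.mul_const ((C + 1) * ‖x‖))
  rw [← mul_apply_eq_comp, cesaroMean_mul_sub_one, smul_apply, norm_smul,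
    RCLike.norm_inv_natCast_add_one]
  gcongr
  calc ‖(T ^ (n + 1) - 1) x‖ ≤ ‖(T ^ (n + 1)) x‖ + ‖x‖ := by
        rw [sub_apply, one_apply_eq_self]; exact norm_sub_le _ _
    _ ≤ C * ‖x‖ + ‖x‖ := by gcongr; exact (T ^ (n + 1)).le_of_opNorm_le (hC _) x
    _ = (C + 1) * ‖x‖ := by ring

theorem cesaroMean_apply_sub_mem_range (n : ℕ) (x : E) :
    T.cesaroMean n x - x ∈ Set.range ⇑(T - 1) := by
  have h : T.cesaroMean n - 1 =
      (T - 1) * (((n : 𝕜) + 1)⁻¹ • ∑ k ∈ range (n + 1), ∑ j ∈ range k, T ^ j) := by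
    rw [mul_smul_comm, mul_sum]
    simp_rw [mul_geom_sum]
    rw [sum_sub_distrib, sum_const, card_range, smul_sub, ← cesaroMean,
      ← Nat.cast_smul_eq_nsmul 𝕜, Nat.cast_succ, inv_smul_smul₀ (Nat.cast_add_one_ne_zero n)]
  exact ⟨_, by rw [← mul_apply_eq_comp, ← h, sub_apply, one_apply_eq_self]⟩

theorem equicontinuous_cesaroMean (hC : ∀ n, ‖T ^ n‖ ≤ C) :
    Equicontinuous fun n => ⇑(T.cesaroMean n) := by
  have hbdd : ∃ C, ∀ n, ‖T.cesaroMean n‖ ≤ C := ⟨C, norm_cesaroMean_le hC⟩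
  exact ((NormedSpace.equicontinuous_TFAE T.cesaroMean).out 5 1).1 hbdd

theorem tendsto_cesaroMean_of_mem_closure_range (hC : ∀ n, ‖T ^ n‖ ≤ C) {z : E}
    (hz : z ∈ closure (Set.range ⇑(T - 1))) :
    Tendsto (fun n => T.cesaroMean n z) atTop (𝓝 0) := by
  refine closure_minimal ?_
    ((equicontinuous_cesaroMean hC).isClosed_setOfPred_tendsto continuous_const) hz
  rintro _ ⟨x, rfl⟩
  exact tendsto_cesaroMean_apply_sub_one hC x

theorem exists_apply_eq_self_tendsto_cesaroMean
    (hrefl : Function.Surjective (inclusionInDoubleDual 𝕜 E)) (hC : ∀ n, ‖T ^ n‖ ≤ C) (x : E) :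
    ∃ y, T y = y ∧ Tendsto (fun n => T.cesaroMean n x) atTop (𝓝 y) := by
  have hbdd : IsBounded (Set.range fun n => T.cesaroMean n x) :=
    isBounded_iff_forall_norm_le.2 ⟨C * ‖x‖, Set.forall_mem_range.2 fun n =>
      (T.cesaroMean n).le_of_opNorm_le (norm_cesaroMean_le hC n) x⟩
  obtain ⟨y, hy⟩ := exists_mapClusterPt_toWeakSpace_of_isBounded hrefl (l := atTop) hbdd
  have hTy : T y = y := by
    have hcl := hy.tendsto_comp (WeakSpace.map (T - 1)).continuous.continuousAt
    have hlim : Tendsto (WeakSpace.map (T - 1) ∘ toWeakSpace 𝕜 E ∘ fun n => T.cesaroMean n x)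
        atTop (𝓝 0) := by
      refine (((toWeakSpaceCLM 𝕜 E).continuous.tendsto 0).comp
        (tendsto_cesaroMean_apply_sub_one hC x)).congr fun n => ?_
      exact congrArg (toWeakSpace 𝕜 E) (cesaroMean_apply_sub_one_comm n x)
    have hzero : (T - 1) y = 0 := hcl.eq_of_tendsto hlim
    rwa [sub_apply, one_apply_eq_self, sub_eq_zero] at hzero
  have hmem : y - x ∈ closure (Set.range ⇑(T - 1)) := by
    have hcl := hy.tendsto_comp ((continuous_sub_right (toWeakSpace 𝕜 E x)).tendsto _)
    have hw : toWeakSpace 𝕜 E (y - x) ∈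
        closure (toWeakSpace 𝕜 E '' ((T - 1 : E →L[𝕜] E) : E →ₗ[𝕜] E).range) :=
      isClosed_closure.mem_of_mapClusterPt hcl (Eventually.of_forall fun n =>
        subset_closure (Set.mem_image_of_mem _ (cesaroMean_apply_sub_mem_range n x)))
    rw [← Submodule.toWeakSpace_closure] at hw
    obtain ⟨z, hz, hzy⟩ := hw
    exact (toWeakSpace 𝕜 E).injective hzy ▸ hz
  refine ⟨y, hTy, ?_⟩
  have := (tendsto_const_nhds (x := y)).sub (tendsto_cesaroMean_of_mem_closure_range hC hmem)
  simpa [map_sub, cesaroMean_apply_of_apply_eq_self hTy] using this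

theorem exists_tendsto_cesaroMean
    (hrefl : Function.Surjective (inclusionInDoubleDual 𝕜 E)) (hC : ∀ n, ‖T ^ n‖ ≤ C) :
    ∃ P : E →L[𝕜] E, T.comp P = P ∧
      ∀ x, Tendsto (fun n => T.cesaroMean n x) atTop (𝓝 (P x)) := by
  choose f hfix hf using exists_apply_eq_self_tendsto_cesaroMean hrefl hC
  have hlim : Tendsto (fun n x => T.cesaroMean n x) atTop (𝓝 f) := tendsto_pi_nhds.2 hf
  exact ⟨⟨linearMapOfTendsto f (fun n => (T.cesaroMean n : E →ₗ[𝕜] E)) hlim,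
    hlim.continuous_of_equicontinuous (equicontinuous_cesaroMean hC)⟩, ext hfix, hf⟩

theorem apply_eq_self_of_tendsto_cesaroMean {P : E →L[𝕜] E}
    (hP : ∀ x, Tendsto (fun n => T.cesaroMean n x) atTop (𝓝 (P x))) {z : E} (hz : T z = z) :
    P z = z :=
  tendsto_nhds_unique (hP z) (by simp [cesaroMean_apply_of_apply_eq_self hz])

theorem comp_eq_of_tendsto_cesaroMean {P : E →L[𝕜] E}
    (hP : ∀ x, Tendsto (fun n => T.cesaroMean n x) atTop (𝓝 (P x))) (hC : ∀ n, ‖T ^ n‖ ≤ C) :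
    P.comp T = P := by
  ext x
  refine tendsto_nhds_unique (hP (T x)) ?_
  simpa using (hP x).add (tendsto_cesaroMean_apply_sub_one hC x)

end ContinuousLinearMap

theorem stmt_12_general (X : Type*) [NormedAddCommGroup X] [NormedSpace ℂ X]
    (hrefl : Function.Surjective (NormedSpace.inclusionInDoubleDual ℂ X))
    (T : X →L[ℂ] X) (C : ℝ) (hC : ∀ n : ℕ, ‖T ^ n‖ ≤ C) :
    ∃ P : X →L[ℂ] X,
      P.comp P = P ∧
      LinearMap.range (P : X →ₗ[ℂ] X) = LinearMap.ker ((ContinuousLinearMap.id ℂ X - T : X →L[ℂ] X) : X →ₗ[ℂ] X) ∧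
      P.comp T = P ∧ T.comp P = P ∧
      ∀ x : X, Filter.Tendsto
        (fun m : ℕ => (((m : ℝ) + 1)⁻¹) • ∑ k ∈ Finset.range (m + 1), (T ^ k) x)
        Filter.atTop (nhds (P x)) := by
  obtain ⟨P, hTP, hP⟩ := T.exists_tendsto_cesaroMean hrefl hC
  have hPT : ∀ x, T (P x) = P x := fun x => congr($hTP x)
  refine ⟨P, ?_, ?_, T.comp_eq_of_tendsto_cesaroMean hP hC, hTP, fun x => ?_⟩
  · ext x
    exact T.apply_eq_self_of_tendsto_cesaroMean hP (hPT x)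
  · ext z
    simp only [LinearMap.mem_range, LinearMap.mem_ker, ContinuousLinearMap.coe_coe,
      sub_apply, ContinuousLinearMap.id_apply, sub_eq_zero]
    exact ⟨by rintro ⟨x, rfl⟩; exact (hPT x).symm,
      fun hz => ⟨z, T.apply_eq_self_of_tendsto_cesaroMean hP hz.symm⟩⟩
  · convert hP x using 2 with m
    rw [ContinuousLinearMap.cesaroMean, smul_apply, _root_.sum_apply, ← Complex.coe_smul]
    push_cast
    rfl

theorem stmt_12 (X : Type*) [NormedAddCommGroup X] [NormedSpace ℂ X] [CompleteSpace X]
    (hrefl : Function.Surjective (NormedSpace.inclusionInDoubleDual ℂ X))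
    (T : X →L[ℂ] X) (C : ℝ) (hC : ∀ n : ℕ, ‖T ^ n‖ ≤ C) :
    ∃ P : X →L[ℂ] X,
      P.comp P = P ∧
      LinearMap.range (P : X →ₗ[ℂ] X) = LinearMap.ker ((ContinuousLinearMap.id ℂ X - T : X →L[ℂ] X) : X →ₗ[ℂ] X) ∧
      P.comp T = P ∧ T.comp P = P ∧
      ∀ x : X, Filter.Tendsto
        (fun m : ℕ => (((m : ℝ) + 1)⁻¹) • ∑ k ∈ Finset.range (m + 1), (T ^ k) x)
        Filter.atTop (nhds (P x)) :=
  stmt_12_general X hrefl T C hC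
end
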